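/- arXiv:2312.09914 — 4 statements merged into one kernel-verified Lean document; each statement's English description precedes it below -/
import Mathlib

section
/- Let (W,+) be a semigroup. Then A_fin(W) is a (two-sided) ideal of (W,+), i.e., W + A_fin(W) ⊆ A_fin(W) and A_fin(W) + W ⊆ A_fin(W). -/
/-!
An element `α ∈ A_fin(W)` acts on any `w` in one of two ways: `w + α = α + w = α` when `w ∉ E^≤(α)`,
and `w + α = α + w = w` when `w ∈ E^≤(α)`. So `W + α` and `α + W` lie in `{α} ∪ E^≤(α)`, and it
suffices that `A_fin(W)` is closed downwards in the Rees order. For `f ≤_H α` we have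
`E^≤(f) ⊆ E^≤(α)`, which gives finiteness and linearity; an element `w ∉ E^≤(f)` either lies in
`E^≤(α)`, where linearity forces `f ≤_H w`, or is absorbed by `α`, hence by `f = α + f = f + α`.
-/

open Pointwise

/-- Principal left ideal W_L(u) = (W + {u}) ∪ {u}. -/
def WLset {W : Type*} [AddSemigroup W] (u : W) : Set W :=
  ((Set.univ : Set W) + ({u} : Set W)) ∪ {u}

/-- Principal right ideal W_R(u) = ({u} + W) ∪ {u}. -/
def WRset {W : Type*} [AddSemigroup W] (u : W) : Set W :=
  (({u} : Set W) + (Set.univ : Set W)) ∪ {u}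

/-- Principal two-sided ideal W(u) = (W_L(u) + W) ∪ W_L(u). -/
def WIset {W : Type*} [AddSemigroup W] (u : W) : Set W :=
  (WLset u + (Set.univ : Set W)) ∪ WLset u

/-- Green L-class. -/
def Lclass {W : Type*} [AddSemigroup W] (u : W) : Set W := {v | WLset u = WLset v}

/-- Green R-class. -/
def Rclass {W : Type*} [AddSemigroup W] (u : W) : Set W := {v | WRset u = WRset v}

/-- Green H-class. -/
def Hclass {W : Type*} [AddSemigroup W] (u : W) : Set W :=
  {v | WLset u = WLset v ∧ WRset u = WRset v}

def IsLeftIdealSG {W : Type*} [AddSemigroup W] (A : Set W) : Prop :=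
  (Set.univ : Set W) + A ⊆ A

def IsRightIdealSG {W : Type*} [AddSemigroup W] (A : Set W) : Prop :=
  A + (Set.univ : Set W) ⊆ A

def IsIdealSG {W : Type*} [AddSemigroup W] (A : Set W) : Prop :=
  IsLeftIdealSG A ∧ IsRightIdealSG A

/-- The set E(W) of idempotents. -/
def Eset (W : Type*) [AddSemigroup W] : Set W := {e | e + e = e}

/-- The Rees order: f ≤_H e iff e + f = f + e = f. -/
def ReesLE {W : Type*} [AddSemigroup W] (f e : W) : Prop := e + f = f ∧ f + e = f

/-- E^≤(e) = {f ∈ E(W) | f ≤_H e}. -/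
def Ele {W : Type*} [AddSemigroup W] (e : W) : Set W := {f ∈ Eset W | ReesLE f e}

/-- E^lin(W): idempotents α such that ≤_H is a total order on E^≤(α). -/
def Elin (W : Type*) [AddSemigroup W] : Set W :=
  {α ∈ Eset W | ∀ f ∈ Ele α, ∀ g ∈ Ele α, ReesLE f g ∨ ReesLE g f}

def Afin (W : Type*) [AddSemigroup W] : Set W :=
  {α ∈ Elin W | (Ele α).Finite ∧ ∀ w ∉ Ele α, w + α = α ∧ α + w = α}

/-- The set A(W) of quasi-absorbing elements. -/
def AW (W : Type*) [AddSemigroup W] : Set W :=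
  {α ∈ Elin W | ∀ w ∉ Ele α, w + α = α ∧ α + w = α}

/-- Ā_n = ⋃_{i=1}^n A_i. -/
def Abar (W : Type*) [AddSemigroup W] : ℕ → Set W
  | 0 => ∅
  | n + 1 => Abar W n ∪ {α | α ∉ Abar W n ∧ ∀ w ∉ Abar W n, w + α = α ∧ α + w = α}

/-- The sets A_n from the stepwise construction. -/
def Astep (W : Type*) [AddSemigroup W] : ℕ → Set W
  | 0 => ∅
  | n + 1 => {α | α ∉ Abar W n ∧ ∀ w ∉ Abar W n, w + α = α ∧ α + w = α}

/-- The set A_s(W) of stepwise quasi-absorbing elements. -/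
def As (W : Type*) [AddSemigroup W] : Set W := {α | ∃ n, α ∈ Astep W n}

/-- The set P(A) of A-primitive idempotents. -/
def Pset {W : Type*} [AddSemigroup W] (A : Set W) : Set W :=
  {e | e ∈ Eset W \ A ∧ ∀ f ∈ Eset W, ReesLE f e → f = e ∨ f ∈ A}

/-- G ⊆ W is a group under +: closed, with a two-sided identity and inverses. -/
def IsGroupOn {W : Type*} [AddSemigroup W] (G : Set W) : Prop :=
  (∀ a ∈ G, ∀ b ∈ G, a + b ∈ G) ∧
  ∃ e ∈ G, (∀ a ∈ G, a + e = a ∧ e + a = a) ∧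
    ∀ a ∈ G, ∃ b ∈ G, a + b = e ∧ b + a = e

/-- D is an A-minimal ideal. -/
def IsMinimalIdealRel {W : Type*} [AddSemigroup W] (A D : Set W) : Prop :=
  IsIdealSG D ∧ ¬ D ⊆ A ∧ ∀ E : Set W, IsIdealSG E → E ⊂ D → E ⊆ A

/-- D is an ideal of the subsemigroup (V,+). -/
def IsIdealIn {W : Type*} [AddSemigroup W] (V D : Set W) : Prop :=
  D ⊆ V ∧ V + D ⊆ D ∧ D + V ⊆ D

/-- The subsemigroup (V,+) is A-simple. -/
def IsSimpleRel {W : Type*} [AddSemigroup W] (V A : Set W) : Prop :=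
  A ⊂ V ∧ ∀ D : Set W, IsIdealIn V D → D = V ∨ D ⊆ A

/-- A bottleneck ideal. -/
def IsBottleneck {W : Type*} [AddSemigroup W] (A : Set W) : Prop :=
  IsIdealSG A ∧ ∀ D : Set W, IsIdealSG D → D ⊆ A ∨ A ⊆ D

section

variable {W : Type*} [AddSemigroup W]

theorem ReesLE.absorb_of_absorb {f α w : W} (hf : ReesLE f α) (hw : w + α = α ∧ α + w = α) :
    w + f = f ∧ f + w = f :=
  ⟨by rw [← hf.1, ← add_assoc, hw.1], by rw [← hf.2, add_assoc, hw.2]⟩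

theorem ReesLE.trans {f g h : W} (hfg : ReesLE f g) (hgh : ReesLE g h) : ReesLE f h :=
  hfg.absorb_of_absorb hgh

theorem Ele_subset_Ele_of_mem {f α : W} (hf : f ∈ Ele α) : Ele f ⊆ Ele α :=
  fun _ ⟨hgE, hgf⟩ => ⟨hgE, hgf.trans hf.2⟩

theorem mem_Afin_of_mem_Ele {α f : W} (hα : α ∈ Afin W) (hf : f ∈ Ele α) : f ∈ Afin W := by
  obtain ⟨⟨-, hlin⟩, hfin, habs⟩ := hα
  have hsub := Ele_subset_Ele_of_mem hf
  refine ⟨⟨hf.1, fun g hg h hh => hlin g (hsub hg) h (hsub hh)⟩, hfin.subset hsub, fun w hw => ?_⟩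
  by_cases hwα : w ∈ Ele α
  · exact (hlin w hwα f hf).resolve_left fun hwf => hw ⟨hwα.1, hwf⟩
  · exact hf.2.absorb_of_absorb (habs w hwα)

theorem add_mem_Afin_of_mem_right (w : W) {α : W} (hα : α ∈ Afin W) : w + α ∈ Afin W := by
  by_cases hw : w ∈ Ele α
  · rw [hw.2.2]
    exact mem_Afin_of_mem_Ele hα hw
  · rwa [(hα.2.2 w hw).1]

theorem add_mem_Afin_of_mem_left {α : W} (hα : α ∈ Afin W) (w : W) : α + w ∈ Afin W := by
  by_cases hw : w ∈ Ele α
  · rw [hw.2.1]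
    exact mem_Afin_of_mem_Ele hα hw
  · rwa [(hα.2.2 w hw).2]

end

theorem Afin_ideal {W : Type*} [AddSemigroup W] :
    IsIdealSG (Afin W) :=
  ⟨Set.add_subset_iff.2 fun w _ _ hα => add_mem_Afin_of_mem_right w hα,
    Set.add_subset_iff.2 fun _ hα w _ => add_mem_Afin_of_mem_left hα w⟩
end

section
/- Let (W,+) be a semigroup, A ⊆ W an ideal of (W,+), and e ∈ P(A). Then H(e) = (W_L(e) ∩ W_R(e)) \ ⋃_{f ∈ P(A)} ((W_L(f) ∩ W_R(f)) \ H(f)). -/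
open Pointwise

/-!
If `v ∈ H(e)` lies in `W_L(f) ∩ W_R(f)` for some `f ∈ P(A)`, then so does `e`, because
`W_L(e) = W_L(v)` and `W_R(e) = W_R(v)`. Since `f` is idempotent this means `e ≤_H f`, and
primitivity of `f` forces `e = f`; so `v ∈ H(f)`. The reverse inclusion is the case `f = e`.
-/

section Green

variable {W : Type*} [AddSemigroup W]

@[simp]
lemma mem_WLset {u v : W} : v ∈ WLset u ↔ (∃ w, w + u = v) ∨ v = u := by
  simp [WLset, or_comm]

@[simp]
lemma mem_WRset {u v : W} : v ∈ WRset u ↔ (∃ w, u + w = v) ∨ v = u := by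
  simp [WRset, or_comm]

lemma self_mem_WLset (u : W) : u ∈ WLset u := mem_WLset.2 (Or.inr rfl)

lemma self_mem_WRset (u : W) : u ∈ WRset u := mem_WRset.2 (Or.inr rfl)

lemma WLset_subset_of_mem {u v : W} (h : v ∈ WLset u) : WLset v ⊆ WLset u := by
  rcases mem_WLset.1 h with ⟨w, rfl⟩ | rfl
  · rintro x (hx : x ∈ WLset (w + u))
    rcases mem_WLset.1 hx with ⟨y, rfl⟩ | rfl
    · exact mem_WLset.2 (Or.inl ⟨y + w, add_assoc y w u⟩)
    · exact mem_WLset.2 (Or.inl ⟨w, rfl⟩)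
  · exact subset_rfl

lemma WRset_subset_of_mem {u v : W} (h : v ∈ WRset u) : WRset v ⊆ WRset u := by
  rcases mem_WRset.1 h with ⟨w, rfl⟩ | rfl
  · rintro x (hx : x ∈ WRset (u + w))
    rcases mem_WRset.1 hx with ⟨y, rfl⟩ | rfl
    · exact mem_WRset.2 (Or.inl ⟨w + y, (add_assoc u w y).symm⟩)
    · exact mem_WRset.2 (Or.inl ⟨w, rfl⟩)
  · exact subset_rfl

lemma Hclass_subset_WLset_inter_WRset (u : W) : Hclass u ⊆ WLset u ∩ WRset u :=
  fun _ ⟨hL, hR⟩ => ⟨hL ▸ self_mem_WLset _, hR ▸ self_mem_WRset _⟩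

lemma mem_WLset_inter_WRset_of_mem_Hclass {u v f : W} (hv : v ∈ Hclass u)
    (hvf : v ∈ WLset f ∩ WRset f) : u ∈ WLset f ∩ WRset f :=
  ⟨WLset_subset_of_mem hvf.1 (hv.1 ▸ self_mem_WLset u),
    WRset_subset_of_mem hvf.2 (hv.2 ▸ self_mem_WRset u)⟩

/-- An idempotent `f` is a right identity on `W + f` and a left identity on `f + W`. -/
lemma reesLE_of_mem_WLset_inter_WRset {e f : W} (hf : f ∈ Eset W)
    (he : e ∈ WLset f ∩ WRset f) : ReesLE e f := by
  have hff : f + f = f := hf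
  have hright : e + f = e := by
    rcases mem_WLset.1 he.1 with ⟨x, rfl⟩ | rfl
    · rw [add_assoc, hff]
    · exact hff
  have hleft : f + e = e := by
    rcases mem_WRset.1 he.2 with ⟨y, rfl⟩ | rfl
    · rw [← add_assoc, hff]
    · exact hff
  exact ⟨hleft, hright⟩

lemma eq_of_mem_Pset_of_mem_WLset_inter_WRset {A : Set W} {e f : W} (he : e ∈ Pset A)
    (hf : f ∈ Pset A) (hef : e ∈ WLset f ∩ WRset f) : e = f :=
  (hf.2 e he.1.1 (reesLE_of_mem_WLset_inter_WRset hf.1.1 hef)).resolve_right he.1.2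

end Green

theorem quasi_primitive_H_general {W : Type*} [AddSemigroup W] (A : Set W)
    (e : W) (he : e ∈ Pset A) :
    Hclass e = (WLset e ∩ WRset e) \ ⋃ f ∈ Pset A, ((WLset f ∩ WRset f) \ Hclass f) := by
  ext v
  constructor
  · intro hv
    refine ⟨Hclass_subset_WLset_inter_WRset e hv, ?_⟩
    simp only [Set.mem_iUnion, Set.mem_sdiff, not_exists]
    rintro f hf ⟨hvf, hvHf⟩
    obtain rfl : e = f :=
      eq_of_mem_Pset_of_mem_WLset_inter_WRset he hf (mem_WLset_inter_WRset_of_mem_Hclass hv hvf)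
    exact hvHf hv
  · rintro ⟨hv, hnotin⟩
    by_contra hvH
    exact hnotin (Set.mem_biUnion he ⟨hv, hvH⟩)

theorem quasi_primitive_H {W : Type*} [AddSemigroup W] (A : Set W)
    (hA : IsIdealSG A) (e : W) (he : e ∈ Pset A) :
    Hclass e = (WLset e ∩ WRset e) \ ⋃ f ∈ Pset A, ((WLset f ∩ WRset f) \ Hclass f) :=
  quasi_primitive_H_general A e he
end

section
/- Let (W,+) be a semigroup. If A_fin(W) is a proper subset of A(W), then either P(A_fin(W)) = ∅, or there exists e ∈ A(W) such that P(A_fin(W)) = {e}. -/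
open Pointwise

/-!
Pick `α ∈ A(W) \ A_fin(W)`. An `A_fin(W)`-primitive `e` not below `α` would be absorbed by `α`,
i.e. `α ≤_H e`, forcing `α = e` or `α ∈ A_fin(W)`; so all primitives lie in the chain `E^≤(α)`,
where two primitives are comparable and hence equal. Finally, everything below a quasi-absorbing
element is quasi-absorbing.
-/

section ReesOrder

variable {W : Type*} [AddSemigroup W]

theorem ReesLE.trans_s14 {f e g : W} (hfe : ReesLE f e) (heg : ReesLE e g) : ReesLE f g :=
  ⟨by rw [← hfe.1, ← add_assoc, heg.1], by rw [← hfe.2, add_assoc, heg.2]⟩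

theorem mem_Ele_self {α : W} (hα : α ∈ Eset W) : α ∈ Ele α :=
  ⟨hα, hα, hα⟩

theorem Ele_subset_Ele {e α : W} (he : e ∈ Ele α) : Ele e ⊆ Ele α :=
  fun _ ⟨hfE, hfe⟩ => ⟨hfE, hfe.trans_s14 he.2⟩

theorem mem_AW_of_mem_Ele {e α : W} (hα : α ∈ AW W) (he : e ∈ Ele α) : e ∈ AW W := by
  obtain ⟨⟨-, hαlin⟩, hαabs⟩ := hα
  refine ⟨⟨he.1, fun f hf g hg => hαlin f (Ele_subset_Ele he hf) g (Ele_subset_Ele he hg)⟩,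
    fun w hw => ?_⟩
  by_cases hwα : w ∈ Ele α
  · -- `w` lies below `α` but not below `e`, so by linearity it lies above `e`
    exact (hαlin w hwα e he).resolve_left fun hwe => hw ⟨hwα.1, hwe⟩
  · obtain ⟨hwα_left, hwα_right⟩ := hαabs w hwα
    exact ⟨by rw [← he.2.1, ← add_assoc, hwα_left], by rw [← he.2.2, add_assoc, hwα_right]⟩

end ReesOrder

section Primitive

variable {W : Type*} [AddSemigroup W] {A : Set W}

theorem Pset.eq_of_reesLE {e f : W} (he : e ∈ Pset A) (hf : f ∈ Pset A) (hfe : ReesLE f e) :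
    f = e :=
  (he.2 f hf.1.1 hfe).resolve_right hf.1.2

theorem Pset_subset_Ele {α : W} (hα : α ∈ AW W) (hαA : α ∉ A) : Pset A ⊆ Ele α := by
  intro e he
  by_contra heα
  rcases he.2 α hα.1.1 (hα.2 e heα) with rfl | hαA'
  · exact heα (mem_Ele_self hα.1.1)
  · exact hαA hαA'

theorem Pset_subsingleton_of_subset_Ele {α : W} (hα : α ∈ Elin W) (hP : Pset A ⊆ Ele α) :
    (Pset A).Subsingleton := by
  intro e he f hf
  rcases hα.2 e (hP he) f (hP hf) with hef | hfe
  · exact Pset.eq_of_reesLE hf he hef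
  · exact (Pset.eq_of_reesLE he hf hfe).symm

end Primitive

theorem fin_quasi_primitives {W : Type*} [AddSemigroup W]
    (h : Afin W ⊂ AW W) :
    Pset (Afin W) = ∅ ∨ ∃ e ∈ AW W, Pset (Afin W) = {e} := by
  obtain ⟨α, hαAW, hαAfin⟩ := Set.exists_of_ssubset h
  have hP : Pset (Afin W) ⊆ Ele α := Pset_subset_Ele hαAW hαAfin
  refine (Pset_subsingleton_of_subset_Ele hαAW.1 hP).eq_empty_or_singleton.imp_right ?_
  rintro ⟨e, he⟩
  exact ⟨e, mem_AW_of_mem_Ele hαAW (hP (he ▸ Set.mem_singleton e)), he⟩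
end

section
/- Let (W,+) be a commutative semigroup, A ⊆ W an ideal of (W,+), and e an idempotent of W with e ∉ A. Then the following statements are equivalent: (1) H(e) = W(e)\A; (2) W(e)\A with the operation + is a group (closed under +, with a two-sided identity and inverses); (3) W(e) is an A-minimal ideal of (W,+); (4) the subsemigroup (W(e),+) is (A ∩ W(e))-simple. -/
open Pointwise

/-! For an idempotent `e` of a commutative semigroup, `W(e) = W + e` and `e` is an identity on
`W(e)`. Each of the four conditions turns out to say the same thing: every `a ∈ W(e) \ A` divides
`e`, i.e. `w + a = e` for some `w`. Such an `a` generates `W(e)` as an ideal and is a unit of the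
monoid `(W(e), +, e)`. Conversely, if some `a ∈ W(e) \ A` does not divide `e`, then `W + a` is an
ideal strictly inside `W(e)` but not inside `A`, and `a` is not `H`-equivalent to `e`. An ideal of
the subsemigroup `W(e)` is an ideal of `W`, since `w + d = (w + e) + d`, which makes (3) and (4)
the same condition. -/

section CommSemigroup

variable {W : Type*} [AddCommSemigroup W]

theorem mem_univ_add_singleton {a x : W} :
    x ∈ (Set.univ : Set W) + {a} ↔ ∃ w, w + a = x := by
  simp

theorem mem_WLset_iff {v x : W} : x ∈ WLset v ↔ (∃ w, w + v = x) ∨ x = v := by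
  simp [WLset, or_comm]

theorem WRset_eq_WLset (v : W) : WRset v = WLset v := by
  rw [WRset, WLset, add_comm]

theorem mem_Hclass_iff {u v : W} : v ∈ Hclass u ↔ WLset u = WLset v := by
  simp [Hclass, WRset_eq_WLset]

theorem IsLeftIdealSG.add_mem {A : Set W} (hA : IsLeftIdealSG A) (w : W) {a : W} (ha : a ∈ A) :
    w + a ∈ A :=
  hA (Set.add_mem_add (Set.mem_univ w) ha)

theorem isIdealSG_iff_forall_add_mem {D : Set W} :
    IsIdealSG D ↔ ∀ w, ∀ d ∈ D, w + d ∈ D := by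
  refine ⟨fun hD w d hd => hD.1.add_mem w hd, fun hD => ⟨?_, ?_⟩⟩
  · rintro _ ⟨w, -, d, hd, rfl⟩
    exact hD w d hd
  · rintro _ ⟨d, hd, w, -, rfl⟩
    show d + w ∈ D
    rw [add_comm]
    exact hD w d hd

theorem isIdealSG_univ_add_singleton (a : W) : IsIdealSG ((Set.univ : Set W) + {a}) := by
  refine isIdealSG_iff_forall_add_mem.mpr fun w d hd => ?_
  obtain ⟨u, rfl⟩ := mem_univ_add_singleton.mp hd
  exact mem_univ_add_singleton.mpr ⟨w + u, add_assoc w u a⟩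

section Idempotent

variable {e : W} (he : e + e = e)
include he

theorem mem_WIset_iff {x : W} : x ∈ WIset e ↔ ∃ w, w + e = x := by
  refine ⟨?_, fun h => Or.inr (mem_WLset_iff.mpr (Or.inl h))⟩
  have mem_of_WLset : ∀ {y}, y ∈ WLset e → ∃ w, w + e = y := fun hy =>
    (mem_WLset_iff.mp hy).elim id fun hy => ⟨e, hy ▸ he⟩
  rintro (⟨y, hy, u, -, rfl⟩ | hx)
  · obtain ⟨w, rfl⟩ := mem_of_WLset hy
    exact ⟨w + u, add_right_comm w u e⟩
  · exact mem_of_WLset hx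

theorem WLset_eq_WIset : WLset e = WIset e := by
  ext x
  rw [mem_WLset_iff, mem_WIset_iff he]
  exact ⟨fun h => h.elim id fun hx => ⟨e, hx ▸ he⟩, Or.inl⟩

theorem self_mem_WIset : e ∈ WIset e := (mem_WIset_iff he).mpr ⟨e, he⟩

theorem add_mem_WIset (w : W) {x : W} (hx : x ∈ WIset e) : w + x ∈ WIset e := by
  obtain ⟨u, rfl⟩ := (mem_WIset_iff he).mp hx
  exact (mem_WIset_iff he).mpr ⟨w + u, add_assoc w u e⟩

theorem add_eq_of_mem_WIset {x : W} (hx : x ∈ WIset e) : e + x = x := by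
  obtain ⟨w, rfl⟩ := (mem_WIset_iff he).mp hx
  rw [add_left_comm, he]

theorem isIdealSG_WIset : IsIdealSG (WIset e) :=
  isIdealSG_iff_forall_add_mem.mpr fun w _ => add_mem_WIset he w

theorem WIset_subset_of_mem {D : Set W} (hD : IsIdealSG D) (heD : e ∈ D) : WIset e ⊆ D := by
  intro x hx
  obtain ⟨w, rfl⟩ := (mem_WIset_iff he).mp hx
  exact hD.1.add_mem w heD

theorem isIdealIn_WIset_iff {D : Set W} :
    IsIdealIn (WIset e) D ↔ IsIdealSG D ∧ D ⊆ WIset e := by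
  constructor
  · rintro ⟨hDe, hleft, -⟩
    refine ⟨isIdealSG_iff_forall_add_mem.mpr fun w d hd => ?_, hDe⟩
    rw [← add_eq_of_mem_WIset he (hDe hd), ← add_assoc]
    exact hleft (Set.add_mem_add ((mem_WIset_iff he).mpr ⟨w, rfl⟩) hd)
  · rintro ⟨hD, hDe⟩
    exact ⟨hDe, (Set.add_subset_add_right (Set.subset_univ _)).trans hD.1,
      (Set.add_subset_add_left (Set.subset_univ _)).trans hD.2⟩

theorem mem_Hclass_iff_exists_add_eq {v : W} (hv : v ∈ WIset e) :
    v ∈ Hclass e ↔ ∃ w, w + v = e := by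
  rw [mem_Hclass_iff]
  constructor
  · intro h
    have he_mem : e ∈ WLset v := h ▸ mem_WLset_iff.mpr (Or.inr rfl)
    exact (mem_WLset_iff.mp he_mem).elim id fun hev => ⟨e, hev ▸ he⟩
  · rintro ⟨w, hw⟩
    refine Set.Subset.antisymm ?_ ?_
    · intro x hx
      obtain ⟨u, rfl⟩ := (mem_WIset_iff he).mp (WLset_eq_WIset he ▸ hx)
      exact mem_WLset_iff.mpr (Or.inl ⟨u + w, by rw [add_assoc, hw]⟩)
    · intro x hx
      rw [WLset_eq_WIset he]
      obtain ⟨u, rfl⟩ | rfl := mem_WLset_iff.mp hx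
      · exact add_mem_WIset he u hv
      · exact hv

variable {A : Set W}

theorem Hclass_subset_diff (hA : IsLeftIdealSG A) (heA : e ∉ A) :
    Hclass e ⊆ WIset e \ A := by
  intro v hv
  have hv_mem : v ∈ WIset e := by
    rw [← WLset_eq_WIset he, mem_Hclass_iff.mp hv]
    exact mem_WLset_iff.mpr (Or.inr rfl)
  obtain ⟨w, hw⟩ := (mem_Hclass_iff_exists_add_eq he hv_mem).mp hv
  exact ⟨hv_mem, fun hvA => heA (hw ▸ hA.add_mem w hvA)⟩

theorem Hclass_eq_diff_iff (hA : IsLeftIdealSG A) (heA : e ∉ A) :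
    Hclass e = WIset e \ A ↔ ∀ a ∈ WIset e \ A, ∃ w, w + a = e := by
  rw [Set.Subset.antisymm_iff, and_iff_right (Hclass_subset_diff he hA heA)]
  exact forall₂_congr fun a ha => mem_Hclass_iff_exists_add_eq he ha.1

theorem isGroupOn_diff_iff (hA : IsLeftIdealSG A) (heA : e ∉ A) :
    IsGroupOn (WIset e \ A) ↔ ∀ a ∈ WIset e \ A, ∃ w, w + a = e := by
  have he_mem : e ∈ WIset e \ A := ⟨self_mem_WIset he, heA⟩
  constructor
  · rintro ⟨-, ε, ⟨hε, -⟩, hid, hinv⟩ a ha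
    have hεe : ε = e := (add_eq_of_mem_WIset he hε).symm.trans (hid e he_mem).1
    obtain ⟨b, -, -, hba⟩ := hinv a ha
    exact ⟨b, hεe ▸ hba⟩
  · intro hdvd
    refine ⟨?_, e, he_mem, fun a ha => ?_, fun a ha => ?_⟩
    · rintro a ha b ⟨hb, hbA⟩
      refine ⟨add_mem_WIset he a hb, fun habA => heA ?_⟩
      obtain ⟨w, hw⟩ := hdvd a ha
      obtain ⟨u, hu⟩ := hdvd b ⟨hb, hbA⟩
      have he_eq : e = (w + u) + (a + b) := by rw [add_add_add_comm, hw, hu, he]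
      exact he_eq ▸ hA.add_mem _ habA
    · have hea := add_eq_of_mem_WIset he ha.1
      exact ⟨add_comm a e ▸ hea, hea⟩
    · obtain ⟨w, hw⟩ := hdvd a ha
      have hinv : a + (e + w) = e := by rw [add_left_comm, add_comm a w, hw, he]
      refine ⟨e + w, ⟨(mem_WIset_iff he).mpr ⟨w, add_comm w e⟩,
        fun hA' => heA (hinv ▸ hA.add_mem a hA')⟩, hinv, add_comm a _ ▸ hinv⟩

theorem isMinimalIdealRel_WIset_iff (heA : e ∉ A) :
    IsMinimalIdealRel A (WIset e) ↔ ∀ a ∈ WIset e \ A, ∃ w, w + a = e := by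
  constructor
  · rintro ⟨-, -, hmin⟩ a ⟨ha, haA⟩
    by_contra hndvd
    have hsub : (Set.univ : Set W) + {a} ⊂ WIset e := by
      refine (Set.ssubset_iff_of_subset fun x hx => ?_).mpr
        ⟨e, self_mem_WIset he, fun h => hndvd (mem_univ_add_singleton.mp h)⟩
      obtain ⟨w, rfl⟩ := mem_univ_add_singleton.mp hx
      exact add_mem_WIset he w ha
    exact haA (hmin _ (isIdealSG_univ_add_singleton a) hsub
      (mem_univ_add_singleton.mpr ⟨e, add_eq_of_mem_WIset he ha⟩))
  · intro hdvd
    refine ⟨isIdealSG_WIset he, fun h => heA (h (self_mem_WIset he)), fun E hE hEe x hx => ?_⟩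
    by_contra hxA
    obtain ⟨w, hw⟩ := hdvd x ⟨hEe.1 hx, hxA⟩
    exact hEe.2 (WIset_subset_of_mem he hE (hw ▸ hE.1.add_mem w hx))

theorem isSimpleRel_WIset_iff :
    IsSimpleRel (WIset e) (A ∩ WIset e) ↔ IsMinimalIdealRel A (WIset e) := by
  have hsub_iff : A ∩ WIset e ⊂ WIset e ↔ ¬WIset e ⊆ A := by
    rw [Set.ssubset_def, Set.subset_inter_iff]
    simp [Set.inter_subset_right]
  simp only [IsSimpleRel, IsMinimalIdealRel, hsub_iff, isIdealIn_WIset_iff he,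
    and_iff_right (isIdealSG_WIset he), and_imp]
  refine and_congr_right fun _ => ⟨fun h E hE hEe => ?_, fun h D hD hDe => ?_⟩
  · exact ((h E hE hEe.1).resolve_left hEe.ne).trans Set.inter_subset_left
  · exact (Set.eq_or_ssubset_of_subset hDe).imp_right fun hlt =>
      Set.subset_inter (h D hD hlt) hDe

end Idempotent

end CommSemigroup

theorem A_minimal_ideals_char {W : Type*} [AddCommSemigroup W] (A : Set W)
    (hA : IsIdealSG A) (e : W) (he : e ∈ Eset W) (heA : e ∉ A) :
    List.TFAE [Hclass e = WIset e \ A,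
      IsGroupOn (WIset e \ A),
      IsMinimalIdealRel A (WIset e),
      IsSimpleRel (WIset e) (A ∩ WIset e)] := by
  have hdvd := isMinimalIdealRel_WIset_iff (A := A) he heA
  tfae_have 1 ↔ 3 := (Hclass_eq_diff_iff he hA.1 heA).trans hdvd.symm
  tfae_have 2 ↔ 3 := (isGroupOn_diff_iff he hA.1 heA).trans hdvd.symm
  tfae_have 4 ↔ 3 := isSimpleRel_WIset_iff he
  tfae_finish
end
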